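/- Let G be a finite simple graph that is a domain, and let H_i, H_j, H_k be connected components of G^{0-1} with H_i distinct from H_j and from H_k, with vertex bipartitions A_i ∪ B_i, A_j ∪ B_j, A_k ∪ B_k respectively. If G contains an edge between a vertex of A_i and a vertex of A_j, and an edge between a vertex of B_i and a vertex of B_k, then G contains an edge between a vertex of A_j and a vertex of B_k. -/

import Mathlib

variable {V : Type*} [Fintype V] [DecidableEq V]

/-- For `k ∈ ℕ`, a `k`-cover of `G` is a function from the vertices of `G` to `ℕ` that is
not identically zero and whose values at the two endpoints of any edge sum to at least `k`. -/
def IsCover (G : SimpleGraph V) (k : ℕ) (a : V → ℕ) : Prop :=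
  a ≠ 0 ∧ ∀ i j : V, G.Adj i j → k ≤ a i + a j

/-- A `k`-cover is basic if it is not the pointwise sum of a `k`-cover and a `0`-cover. -/
def IsBasicCover (G : SimpleGraph V) (k : ℕ) (a : V → ℕ) : Prop :=
  IsCover G k a ∧ ¬ ∃ b c : V → ℕ, IsCover G k b ∧ IsCover G 0 c ∧ a = b + c

/-- `G` is a domain if for all `s, t` with `s + t ≥ 1`, the pointwise sum of any `s` basic
`1`-covers and any `t` basic `2`-covers of `G` is a basic `(s + 2t)`-cover. -/
def IsGraphDomain (G : SimpleGraph V) : Prop :=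
  ∀ s t : ℕ, 1 ≤ s + t → ∀ f : Fin s → V → ℕ, ∀ g : Fin t → V → ℕ,
    (∀ p, IsBasicCover G 1 (f p)) → (∀ q, IsBasicCover G 2 (g q)) →
    IsBasicCover G (s + 2 * t) ((∑ p, f p) + (∑ q, g q))

/-- `G` is unmixed if all basic `1`-covers of `G` have the same norm. -/
def IsUnmixed (G : SimpleGraph V) : Prop :=
  ∀ a b : V → ℕ, IsBasicCover G 1 a → IsBasicCover G 1 b → ∑ v, a v = ∑ v, b v

/-- `G` satisfies WSC if it has at least one edge and every non-isolated vertex `i` has a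
neighbour `j` such that any neighbour of `i` is adjacent to any neighbour of `j`. -/
def SatisfiesWSC (G : SimpleGraph V) : Prop :=
  (∃ i j : V, G.Adj i j) ∧
    ∀ i : V, (∃ x, G.Adj i x) →
      ∃ j : V, G.Adj i j ∧ ∀ i' j' : V, G.Adj i i' → G.Adj j j' → G.Adj i' j'

/-- `G` satisfies SC if for every edge `{i, j}`, every neighbour `i'` of `i` and every
neighbour `j'` of `j`, one has `i' ≠ j'` and `{i', j'}` is an edge. -/
def SatisfiesSC (G : SimpleGraph V) : Prop :=
  ∀ i j i' j' : V, G.Adj i j → G.Adj i i' → G.Adj j j' → i' ≠ j' ∧ G.Adj i' j'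

/-- `G` satisfies MSC if the set of non-isolated vertices of `G` is nonempty and carries a
perfect matching `M` (a matching of `G` whose vertex set is exactly the set of non-isolated
vertices) such that for every edge `{i, j}` of `M`, every neighbour `i'` of `i` in `G` and
every neighbour `j'` of `j` in `G`, `{i', j'}` is an edge of `G`. -/
def SatisfiesMSC (G : SimpleGraph V) : Prop :=
  ∃ M : G.Subgraph, M.verts = {v : V | ∃ w, G.Adj v w} ∧ M.verts.Nonempty ∧
    M.IsMatching ∧
    ∀ i j : V, M.Adj i j → ∀ i' j' : V, G.Adj i i' → G.Adj j j' → G.Adj i' j'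

/-- The graph `G^{0-1}`: its edges are the edges `{i, j}` of `G` such that `a i + a j = 1`
for every basic `1`-cover `a` of `G`.  (Its vertex set is interpreted as the set of
non-isolated vertices of `G`; here it is defined on all of `V`, and the vertices of `G`
that are isolated stay isolated, so they can be excluded explicitly when needed.) -/
def ZeroOne (G : SimpleGraph V) : SimpleGraph V where
  Adj i j := G.Adj i j ∧ ∀ a : V → ℕ, IsBasicCover G 1 a → a i + a j = 1
  symm := by
    constructor
    intro i j h
    exact ⟨h.1.symm, fun a ha => by rw [add_comm]; exact h.2 a ha⟩
  loopless := by
    constructor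
    intro i h
    exact G.loopless.irrefl i h.1

/-- `A ∪ B` is a vertex bipartition of the connected component `C` of `H`, and the edges of
`H` inside `C` are exactly the pairs `{x, y}` with `x ∈ A` and `y ∈ B` (so the component is
a complete bipartite graph on `A ∪ B`). -/
def IsCompBipartition (H : SimpleGraph V) (C : H.ConnectedComponent) (A B : Set V) : Prop :=
  A ∪ B = C.supp ∧ Disjoint A B ∧
    ∀ x ∈ C.supp, ∀ y ∈ C.supp,
      (H.Adj x y ↔ (x ∈ A ∧ y ∈ B) ∨ (x ∈ B ∧ y ∈ A))

/-- The graph `G⁺` obtained from `G` by attaching a pendant vertex to each vertex of `G`: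
`Sum.inl v` is the original vertex `v`, and `Sum.inr v` is the pendant attached to `v`. -/
def GPlus (G : SimpleGraph V) : SimpleGraph (V ⊕ V) where
  Adj x y :=
    match x, y with
    | Sum.inl u, Sum.inl v => G.Adj u v
    | Sum.inl u, Sum.inr v => u = v
    | Sum.inr u, Sum.inl v => u = v
    | Sum.inr _, Sum.inr _ => False
  symm := by
    constructor
    rintro (u | u) (v | v) h
    · exact h.symm
    · exact h.symm
    · exact h.symm
    · exact h.elim
  loopless := by
    constructor
    rintro (u | u) h
    · exact G.loopless.irrefl u h
    · exact h

/-! If `y₁ ∈ Aⱼ` and `y₂ ∈ Bₖ` were not adjacent, the `1`-cover vanishing exactly on `{y₁, y₂}`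
would dominate a basic `1`-cover `d` with `d y₁ = d y₂ = 0`. The edges `x₁y₁` and `x₂y₂` of `G`
then force `d x₁ ≥ 1` and `d x₂ ≥ 1`, whereas `x₁ ∈ Aᵢ` and `x₂ ∈ Bᵢ` are joined in the complete
bipartite component `Hᵢ` of `G^{0-1}`, so that `d x₁ + d x₂ = 1`. -/

section

omit [DecidableEq V]

lemma IsCover.exists_isBasicCover_le {G : SimpleGraph V} {k : ℕ} {c : V → ℕ}
    (hc : IsCover G k c) : ∃ d, IsBasicCover G k d ∧ d ≤ c := by
  obtain ⟨d, ⟨hd, hdc⟩, hmin⟩ :=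
    (measure fun d : V → ℕ => ∑ v, d v).wf.has_min {d | IsCover G k d ∧ d ≤ c} ⟨c, hc, le_rfl⟩
  refine ⟨d, ⟨hd, ?_⟩, hdc⟩
  rintro ⟨b, e, hb, he, rfl⟩
  obtain ⟨v, hv⟩ : ∃ v, e v ≠ 0 := by
    by_contra! h
    exact he.1 (funext h)
  refine hmin b ⟨hb, le_trans le_self_add hdc⟩ ?_
  exact Finset.sum_lt_sum (fun _ _ => le_self_add)
    ⟨v, Finset.mem_univ v, Nat.lt_add_of_pos_right (Nat.pos_of_ne_zero hv)⟩

omit [Fintype V] in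
lemma isCover_indicator_compl {G : SimpleGraph V} {s : Set V} (hs : G.IsIndepSet s)
    {x : V} (hx : x ∉ s) : IsCover G 1 (sᶜ.indicator 1) := by
  refine ⟨fun h => by simpa [hx] using congrFun h x, fun i j hij => ?_⟩
  by_cases hi : i ∈ s
  · have hj : j ∉ s := fun hj => hs hi hj hij.ne hij
    simp [hj]
  · simp [hi]

lemma exists_isBasicCover_eq_zero_of_isIndepSet {G : SimpleGraph V} {s : Set V}
    (hs : G.IsIndepSet s) {x : V} (hx : x ∉ s) :
    ∃ d, IsBasicCover G 1 d ∧ ∀ y ∈ s, d y = 0 := by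
  obtain ⟨d, hd, hdle⟩ := (isCover_indicator_compl hs hx).exists_isBasicCover_le
  exact ⟨d, hd, fun y hy => Nat.eq_zero_of_le_zero (by simpa [hy] using hdle y)⟩

lemma adj_of_zeroOne_adj {G : SimpleGraph V} {x₁ x₂ y₁ y₂ : V} (h : (ZeroOne G).Adj x₁ x₂)
    (h₁ : G.Adj x₁ y₁) (h₂ : G.Adj x₂ y₂) : G.Adj y₁ y₂ := by
  by_contra hy
  have hindep : G.IsIndepSet {y₁, y₂} :=
    Set.pairwise_pair.mpr fun _ => ⟨hy, fun h' => hy h'.symm⟩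
  have hx₁ : x₁ ∉ ({y₁, y₂} : Set V) := by
    rintro (rfl | rfl)
    · exact h₁.ne rfl
    · exact hy h₁.symm
  obtain ⟨d, hd, hd0⟩ := exists_isBasicCover_eq_zero_of_isIndepSet hindep hx₁
  have hsum := h.2 d hd
  have hd₁ := hd.1.2 _ _ h₁
  have hd₂ := hd.1.2 _ _ h₂
  rw [hd0 y₁ (by simp)] at hd₁
  rw [hd0 y₂ (by simp)] at hd₂
  omega

omit [Fintype V] in
lemma IsCompBipartition.adj {H : SimpleGraph V} {C : H.ConnectedComponent} {A B : Set V}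
    (hb : IsCompBipartition H C A B) {x y : V} (hx : x ∈ A) (hy : y ∈ B) : H.Adj x y := by
  have hsupp : ∀ {v}, v ∈ A ∪ B → v ∈ C.supp := fun hv => hb.1 ▸ hv
  exact (hb.2.2 x (hsupp (.inl hx)) y (hsupp (.inr hy))).mpr (.inl ⟨hx, hy⟩)

end

theorem edge_between_Aj_and_Bk_general (G : SimpleGraph V)
    (Ci : (ZeroOne G).ConnectedComponent)
    (Ai Bi Aj Bk : Set V)
    (hbi : IsCompBipartition (ZeroOne G) Ci Ai Bi)
    (hedge₁ : ∃ x ∈ Ai, ∃ y ∈ Aj, G.Adj x y)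
    (hedge₂ : ∃ x ∈ Bi, ∃ y ∈ Bk, G.Adj x y) :
    ∃ x ∈ Aj, ∃ y ∈ Bk, G.Adj x y := by
  obtain ⟨x₁, hx₁, y₁, hy₁, h₁⟩ := hedge₁
  obtain ⟨x₂, hx₂, y₂, hy₂, h₂⟩ := hedge₂
  exact ⟨y₁, hy₁, y₂, hy₂, adj_of_zeroOne_adj (hbi.adj hx₁ hx₂) h₁ h₂⟩

/-- Let `G` be a domain and let `Hᵢ, Hⱼ, Hₖ` be connected components of
`G^{0-1}` with `Hᵢ` distinct from `Hⱼ` and from `Hₖ`, with bipartitions `Ai ∪ Bi`,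
`Aj ∪ Bj`, `Ak ∪ Bk`.  If `G` has an edge between `Ai` and `Aj` and an edge between `Bi`
and `Bk`, then `G` has an edge between `Aj` and `Bk`. -/
theorem edge_between_Aj_and_Bk (G : SimpleGraph V) (hG : IsGraphDomain G)
    (Ci Cj Ck : (ZeroOne G).ConnectedComponent) (hij : Ci ≠ Cj) (hik : Ci ≠ Ck)
    (hsuppi : Ci.supp ⊆ {v : V | ∃ w, G.Adj v w}) (hsuppj : Cj.supp ⊆ {v : V | ∃ w, G.Adj v w})
    (hsuppk : Ck.supp ⊆ {v : V | ∃ w, G.Adj v w})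
    (Ai Bi Aj Bj Ak Bk : Set V)
    (hbi : IsCompBipartition (ZeroOne G) Ci Ai Bi)
    (hbj : IsCompBipartition (ZeroOne G) Cj Aj Bj)
    (hbk : IsCompBipartition (ZeroOne G) Ck Ak Bk)
    (hedge₁ : ∃ x ∈ Ai, ∃ y ∈ Aj, G.Adj x y)
    (hedge₂ : ∃ x ∈ Bi, ∃ y ∈ Bk, G.Adj x y) :
    ∃ x ∈ Aj, ∃ y ∈ Bk, G.Adj x y :=
  edge_between_Aj_and_Bk_general G Ci Ai Bi Aj Bk hbi hedge₁ hedge₂
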